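/- Normalization (unweighted case, w_j = 1 for all j, so d̃ = d̄ := d + (Σ − d)/(d−1)): for every α ≥ 0, every achievement matrix y, and every poverty cutoff k with 0 < k ≤ d̄, one has 0 ≤ FGT_α(y; z) ≤ 1; the value 1 is attained at the all-zeros achievement matrix and the value 0 is attained at any achievement matrix x with x_{ij} > z_j for all i, j. -/

import Mathlib

/-!
Every gap lies in `[0, 1]` and equals `1` at the zero achievement, so each network-adjusted
deprivation is maximal at the all-zeros row, where the row sum of the `D_{ij}^α` is exactly `d̄`.
Hence every identified person contributes at most `d̄`, and the normalisation by `N d̄` makes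
`FGT_α ≤ 1`, with equality at the all-zeros matrix (everyone is identified since `k ≤ d̄`).
Above every cutoff all gaps vanish, so `FGT_α = 0`.
-/

open Finset

/-- Deprivation gap `r_{ij}^α` for an achievement row `y` (convention `0 ^ (0:ℝ) = 1`). -/
noncomputable def gap {d : ℕ} (z y : Fin d → ℝ) (α : ℝ) (j : Fin d) : ℝ :=
  if y j ≤ z j then ((z j - y j) / z j) ^ α else 0

/-- Network-adjusted deprivation `D_{ij}^α`. -/
noncomputable def Dnet {d : ℕ} (M : Fin d → Fin d → ℝ) (z y : Fin d → ℝ) (α : ℝ)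
    (j : Fin d) : ℝ :=
  gap z y α j + (1 / ((d : ℝ) - 1)) * ∑ j' ∈ Finset.univ.erase j, M j j' * gap z y α j'

/-- Sum `Σ_j` of the `j`-th column of `M`. -/
noncomputable def colSum {d : ℕ} (M : Fin d → Fin d → ℝ) (j : Fin d) : ℝ := ∑ j', M j' j

/-- Weighted deprivation count `D_i = Σ_j w_j D_{ij}^0`. -/
noncomputable def Dcount {d : ℕ} (M : Fin d → Fin d → ℝ) (z w y : Fin d → ℝ) : ℝ :=
  ∑ j, w j * Dnet M z y 0 j

/-- Dual-cutoff identification function `ρ_k`. -/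
noncomputable def rho {d : ℕ} (M : Fin d → Fin d → ℝ) (z w : Fin d → ℝ) (k : ℝ)
    (y : Fin d → ℝ) : ℝ :=
  if k ≤ Dcount M z w y then 1 else 0

/-- Network-adjusted FGT measure with normalizing constant `dt`. -/
noncomputable def FGT {N d : ℕ} (M : Fin d → Fin d → ℝ) (z w : Fin d → ℝ) (k α dt : ℝ)
    (y : Fin N → Fin d → ℝ) : ℝ :=
  (1 / ((N : ℝ) * dt)) * ∑ i, ∑ j, w j * Dnet M z (y i) α j * rho M z w k (y i)

section Deprivation

variable {d : ℕ} {z y : Fin d → ℝ} {α : ℝ} {j : Fin d}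

lemma gap_nonneg (hz : 0 < z j) : 0 ≤ gap z y α j := by
  unfold gap
  split_ifs with h
  · exact Real.rpow_nonneg (div_nonneg (sub_nonneg.mpr h) hz.le) _
  · exact le_rfl

lemma gap_le_one (hz : 0 < z j) (hy : 0 ≤ y j) (hα : 0 ≤ α) : gap z y α j ≤ 1 := by
  unfold gap
  split_ifs with h
  · exact Real.rpow_le_one (div_nonneg (sub_nonneg.mpr h) hz.le)
      ((div_le_one hz).mpr (by linarith)) hα
  · exact zero_le_one

lemma gap_zero (hz : 0 < z j) : gap z (fun _ => 0) α j = 1 := by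
  rw [gap, if_pos hz.le, sub_zero, div_self hz.ne', Real.one_rpow]

lemma gap_eq_zero_of_lt (h : z j < y j) : gap z y α j = 0 :=
  if_neg h.not_ge

lemma one_div_natCast_sub_one_nonneg (hd : 1 ≤ d) : 0 ≤ 1 / ((d : ℝ) - 1) :=
  one_div_nonneg.mpr (sub_nonneg.mpr (by exact_mod_cast hd))

variable {M : Fin d → Fin d → ℝ}

lemma Dnet_nonneg (hd : 1 ≤ d) (hz : ∀ j, 0 < z j) (hM0 : ∀ j j', 0 ≤ M j j') :
    0 ≤ Dnet M z y α j :=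
  add_nonneg (gap_nonneg (hz j)) (mul_nonneg (one_div_natCast_sub_one_nonneg hd)
    (sum_nonneg fun j' _ => mul_nonneg (hM0 j j') (gap_nonneg (hz j'))))

lemma Dnet_le_Dnet_zero (hd : 1 ≤ d) (hz : ∀ j, 0 < z j) (hM0 : ∀ j j', 0 ≤ M j j')
    (hy : ∀ j, 0 ≤ y j) (hα : 0 ≤ α) (β : ℝ) :
    Dnet M z y α j ≤ Dnet M z (fun _ => 0) β j := by
  unfold Dnet
  simp only [gap_zero (hz _)]
  gcongr with j' _
  · exact gap_le_one (hz j) (hy j) hα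
  · exact one_div_natCast_sub_one_nonneg hd
  · exact hM0 j j'
  · exact gap_le_one (hz j') (hy j') hα

lemma sum_Dnet_zero (hz : ∀ j, 0 < z j) (hMdiag : ∀ j, M j j = 1) (β : ℝ) :
    ∑ j, Dnet M z (fun _ => 0) β j
      = (d : ℝ) + ((∑ j, ∑ j', M j j') - (d : ℝ)) / ((d : ℝ) - 1) := by
  have hoff : ∀ j : Fin d, ∑ j' ∈ univ.erase j, M j j' = (∑ j', M j j') - 1 := fun j => by
    rw [sum_erase_eq_sub (mem_univ j), hMdiag j]
  simp only [Dnet, gap_zero (hz _), mul_one, hoff, sum_add_distrib, ← mul_sum,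
    sum_sub_distrib, sum_const, card_univ, Fintype.card_fin, nsmul_eq_mul]
  ring

lemma Dnet_eq_zero_of_lt (h : ∀ j, z j < y j) : Dnet M z y α j = 0 := by
  simp [Dnet, gap_eq_zero_of_lt (h _)]

end Deprivation

section Measure

variable {N d : ℕ} {M : Fin d → Fin d → ℝ} {z w : Fin d → ℝ} {k α dt : ℝ}
  {y : Fin N → Fin d → ℝ}

lemma FGT_eq_sum_div : FGT M z w k α dt y
    = (∑ i, rho M z w k (y i) * ∑ j, w j * Dnet M z (y i) α j) / (N * dt) := by
  rw [FGT, one_div_mul_eq_div]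
  simp only [mul_comm (rho M z w k _), sum_mul]

lemma rho_mul_le {s : ℝ} {yi : Fin d → ℝ} (hs : s ≤ dt) (hdt : 0 ≤ dt) :
    rho M z w k yi * s ≤ dt := by
  unfold rho
  split_ifs <;> linarith

lemma FGT_nonneg (hd : 1 ≤ d) (hz : ∀ j, 0 < z j) (hM0 : ∀ j j', 0 ≤ M j j')
    (hw : ∀ j, 0 ≤ w j) (hdt : 0 ≤ dt) : 0 ≤ FGT M z w k α dt y := by
  rw [FGT_eq_sum_div]
  refine div_nonneg (sum_nonneg fun i _ => mul_nonneg ?_ ?_) (by positivity)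
  · unfold rho; split_ifs <;> norm_num
  · exact sum_nonneg fun j _ => mul_nonneg (hw j) (Dnet_nonneg hd hz hM0)

lemma FGT_le_one (hdt : 0 ≤ dt) (hrow : ∀ i, ∑ j, w j * Dnet M z (y i) α j ≤ dt) :
    FGT M z w k α dt y ≤ 1 := by
  rw [FGT_eq_sum_div]
  refine div_le_one_of_le₀ ?_ (by positivity)
  calc ∑ i, rho M z w k (y i) * ∑ j, w j * Dnet M z (y i) α j
      ≤ ∑ _i : Fin N, dt := sum_le_sum fun i _ => rho_mul_le (hrow i) hdt
    _ = N * dt := by simp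

lemma FGT_eq_one (hN : N ≠ 0) (hdt : dt ≠ 0) (hident : ∀ i, k ≤ Dcount M z w (y i))
    (hrow : ∀ i, ∑ j, w j * Dnet M z (y i) α j = dt) : FGT M z w k α dt y = 1 := by
  simp only [FGT_eq_sum_div, rho, if_pos (hident _), hrow, one_mul, sum_const, card_univ,
    Fintype.card_fin, nsmul_eq_mul]
  exact div_self (mul_ne_zero (Nat.cast_ne_zero.mpr hN) hdt)

lemma FGT_eq_zero_of_lt (h : ∀ i j, z j < y i j) : FGT M z w k α dt y = 0 := by
  simp [FGT_eq_sum_div, Dnet_eq_zero_of_lt (h _)]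

end Measure

theorem FGT_normalized_general
    (d : ℕ) (hd : 2 ≤ d) (z : Fin d → ℝ) (hz : ∀ j, 0 < z j)
    (M : Fin d → Fin d → ℝ) (hM0 : ∀ j j', 0 ≤ M j j')
    (hMdiag : ∀ j, M j j = 1)
    (db : ℝ) (hdb : db = (d : ℝ) + ((∑ j, ∑ j', M j j') - (d : ℝ)) / ((d : ℝ) - 1))
    (k : ℝ) (hk0 : 0 < k) (hk1 : k ≤ db) (α : ℝ) (hα : 0 ≤ α)
    (N : ℕ) (hN : 1 ≤ N) :
    (∀ y : Fin N → Fin d → ℝ, (∀ i j, 0 ≤ y i j) →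
      0 ≤ FGT M z (fun _ => 1) k α db y ∧ FGT M z (fun _ => 1) k α db y ≤ 1) ∧
    FGT M z (fun _ => 1) k α db (fun (_ : Fin N) (_ : Fin d) => (0 : ℝ)) = 1 ∧
    (∀ x : Fin N → Fin d → ℝ, (∀ i j, z j < x i j) →
      FGT M z (fun _ => 1) k α db x = 0) := by
  have hd1 : 1 ≤ d := by omega
  have hdb0 : 0 < db := hk0.trans_le hk1
  have hsum_zero (β : ℝ) : ∑ j, 1 * Dnet M z (fun _ => 0) β j = db := by
    simp only [one_mul, sum_Dnet_zero hz hMdiag, hdb]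
  refine ⟨fun y hy => ⟨FGT_nonneg hd1 hz hM0 (fun _ => zero_le_one) hdb0.le,
    FGT_le_one hdb0.le fun i => ?_⟩,
    FGT_eq_one (by omega) hdb0.ne' (fun _ => hk1.trans (hsum_zero 0).ge) fun _ => hsum_zero α,
    fun x hx => FGT_eq_zero_of_lt hx⟩
  rw [← hsum_zero α]
  exact sum_le_sum fun j _ => by
    simpa only [one_mul] using Dnet_le_Dnet_zero hd1 hz hM0 (hy i) hα α

/-- normalization — `0 ≤ FGT_α(y; z) ≤ 1`, with `1` attained at the all-zeros
matrix and `0` at any matrix whose entries all exceed the cutoffs. -/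
theorem FGT_normalized
    (d : ℕ) (hd : 2 ≤ d) (z : Fin d → ℝ) (hz : ∀ j, 0 < z j)
    (M : Fin d → Fin d → ℝ) (hM0 : ∀ j j', 0 ≤ M j j') (hM1 : ∀ j j', M j j' ≤ 1)
    (hMdiag : ∀ j, M j j = 1)
    (db : ℝ) (hdb : db = (d : ℝ) + ((∑ j, ∑ j', M j j') - (d : ℝ)) / ((d : ℝ) - 1))
    (k : ℝ) (hk0 : 0 < k) (hk1 : k ≤ db) (α : ℝ) (hα : 0 ≤ α)
    (N : ℕ) (hN : 1 ≤ N) :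
    (∀ y : Fin N → Fin d → ℝ, (∀ i j, 0 ≤ y i j) →
      0 ≤ FGT M z (fun _ => 1) k α db y ∧ FGT M z (fun _ => 1) k α db y ≤ 1) ∧
    FGT M z (fun _ => 1) k α db (fun (_ : Fin N) (_ : Fin d) => (0 : ℝ)) = 1 ∧
    (∀ x : Fin N → Fin d → ℝ, (∀ i j, z j < x i j) →
      FGT M z (fun _ => 1) k α db x = 0) :=
  FGT_normalized_general d hd z hz M hM0 hMdiag db hdb k hk0 hk1 α hα N hN
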